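/- arXiv:1804.10004 — 3 statements merged into one kernel-verified Lean document; each statement's English description precedes it below -/
import Mathlib

section
/- For a negation-free ground program Q, the least fixed point of the immediate-consequence operator equals the set of atoms derivable from Q by intuitionistic (in fact minimal) logic, identifying each clause a ← a₁,…,aₙ with the formula a₁ → ⋯ → aₙ → a. -/
namespace ASP

/-- Formulas of minimal implicational propositional logic over atoms `α`. -/
inductive PForm (α : Type) where
  | at_ : α → PForm α
  | imp : PForm α → PForm α → PForm α

/-- Provability in minimal propositional logic (only → introduction/elimination). -/
inductive PPrv {α : Type} : Set (PForm α) → PForm α → Prop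
  | ax {Γ : Set (PForm α)} {φ : PForm α} : φ ∈ Γ → PPrv Γ φ
  | impI {Γ : Set (PForm α)} {φ ψ : PForm α} : PPrv (insert φ Γ) ψ → PPrv Γ (.imp φ ψ)
  | impE {Γ : Set (PForm α)} {φ ψ : PForm α} : PPrv Γ (.imp φ ψ) → PPrv Γ φ → PPrv Γ ψ

end ASP

/-- A (ground, negation-free) definite clause `head ← body`. -/
structure DClause (α : Type) where
  head : α
  body : List α

/-- The immediate-consequence operator of a definite program, as a monotone map. -/
def FopHom {α : Type} (Q : Set (DClause α)) : Set α →o Set α where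
  toFun I := I ∪ {a | ∃ c ∈ Q, c.head = a ∧ ∀ b ∈ c.body, b ∈ I}
  monotone' := by
    intro I J h x hx
    rcases hx with hx | ⟨c, hc, h1, h2⟩
    · exact Or.inl (h hx)
    · exact Or.inr ⟨c, hc, h1, fun b hb => h (h2 b hb)⟩

/-- The clause `a ← a₁,…,aₙ` identified with the formula `a₁ → ⋯ → aₙ → a`. -/
def cform {α : Type} (c : DClause α) : ASP.PForm α :=
  c.body.foldr (fun b f => .imp (.at_ b) f) (.at_ c.head)

/-!
Reading a set of atoms `I` as a valuation, a clause formula holds in `I` exactly when `I` is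
closed under that clause. Hence every prefixed point of the immediate-consequence operator is a
model of the program, and by soundness of minimal logic contains every derivable atom. Conversely
the derivable atoms are themselves a prefixed point, by modus ponens along each clause body.
The least fixed point is the least prefixed point, so both inclusions follow.
-/

namespace ASP

def PForm.Holds {α : Type} (I : Set α) : PForm α → Prop
  | .at_ a => a ∈ I
  | .imp φ ψ => φ.Holds I → ψ.Holds I

theorem PPrv.holds {α : Type} {I : Set α} {Γ : Set (PForm α)} {φ : PForm α}
    (h : PPrv Γ φ) (hΓ : ∀ γ ∈ Γ, γ.Holds I) : φ.Holds I := by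
  induction h with
  | ax hφ => exact hΓ _ hφ
  | impI _ ih =>
    intro hφ
    exact ih (Set.forall_mem_insert.2 ⟨hφ, hΓ⟩)
  | impE _ _ ihImp ihArg => exact ihImp hΓ (ihArg hΓ)

theorem PForm.holds_foldr_imp_iff {α : Type} (I : Set α) (l : List α) (φ : PForm α) :
    (l.foldr (fun b f => .imp (.at_ b) f) φ).Holds I ↔ ((∀ b ∈ l, b ∈ I) → φ.Holds I) := by
  induction l with
  | nil => simp
  | cons x xs ih =>
    simp only [List.foldr, PForm.Holds, ih, List.forall_mem_cons]
    exact ⟨fun h ⟨hx, hxs⟩ => h hx hxs, fun h hx hxs => h ⟨hx, hxs⟩⟩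

theorem PPrv.foldr_impE {α : Type} {Γ : Set (PForm α)} (l : List α) {φ : PForm α}
    (h : PPrv Γ (l.foldr (fun b f => .imp (.at_ b) f) φ))
    (hl : ∀ b ∈ l, PPrv Γ (.at_ b)) : PPrv Γ φ := by
  induction l with
  | nil => exact h
  | cons x xs ih =>
    rw [List.forall_mem_cons] at hl
    exact ih (h.impE hl.1) hl.2

end ASP

open ASP

theorem cform_holds_iff {α : Type} (I : Set α) (c : DClause α) :
    (cform c).Holds I ↔ ((∀ b ∈ c.body, b ∈ I) → c.head ∈ I) :=
  PForm.holds_foldr_imp_iff I c.body _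

theorem cform_holds_of_fopHom_le {α : Type} {Q : Set (DClause α)} {I : Set α}
    (hI : FopHom Q I ≤ I) {c : DClause α} (hc : c ∈ Q) : (cform c).Holds I :=
  (cform_holds_iff I c).2 fun hbody => hI (Or.inr ⟨c, hc, rfl, hbody⟩)

theorem fopHom_derivable_le {α : Type} (Q : Set (DClause α)) :
    FopHom Q {a | PPrv (cform '' Q) (.at_ a)} ≤ {a | PPrv (cform '' Q) (.at_ a)} := by
  rintro a (ha | ⟨c, hc, rfl, hbody⟩)
  · exact ha
  · exact (PPrv.ax (Set.mem_image_of_mem cform hc)).foldr_impE c.body hbody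

theorem derivable_subset_of_fopHom_le {α : Type} {Q : Set (DClause α)} {I : Set α}
    (hI : FopHom Q I ≤ I) : {a | PPrv (cform '' Q) (.at_ a)} ⊆ I := fun _ ha =>
  ha.holds (Set.forall_mem_image.2 fun _ hc => cform_holds_of_fopHom_le hI hc)

theorem stmt2_general {α : Type} (Q : Set (DClause α)) :
    OrderHom.lfp (FopHom Q) = {a : α | ASP.PPrv (cform '' Q) (.at_ a)} :=
  le_antisymm (OrderHom.lfp_le _ (fopHom_derivable_le Q))
    (OrderHom.le_lfp _ fun _ hI => derivable_subset_of_fopHom_le hI)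

/-- For a negation-free ground program Q, the least fixed point of the
immediate-consequence operator equals the set of atoms provable from the
clause formulas in minimal implicational logic. -/
theorem stmt2 {α : Type} (Q : Set (DClause α)) (hfin : Q.Finite) :
    OrderHom.lfp (FopHom Q) = {a : α | ASP.PPrv (cform '' Q) (.at_ a)} :=
  stmt2_general Q
end

section
/- I(P,M) = { a ∈ B(P) | the program P̄ together with the set M̄ intuitionistically proves a }, where P̄ is obtained from the grounding of P by replacing every negative atom ¬b by a fresh atom b̄, and M̄ = { b̄ | b ∈ B(P) \ M }. -/
namespace ASP

/-- A ground clause `head ← pos, ¬neg` of an answer set program. -/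
structure GClause (α : Type) where
  head : α
  pos : List α
  neg : List α

variable {α : Type}

/-- Immediate-consequence operator of the Gelfond–Lifschitz reduct `P^M`:
`F(I) = I ∪ {a | some clause a ← a₁,…,aₙ of P^M has all aᵢ ∈ I}`. -/
def tcons (P : Set (GClause α)) (M : Set α) : Set α →o Set α where
  toFun I := I ∪ {a | ∃ c ∈ P, c.head = a ∧ (∀ b ∈ c.pos, b ∈ I) ∧ (∀ b ∈ c.neg, b ∉ M)}
  monotone' := by
    intro I J h x hx
    rcases hx with hx | ⟨c, hc, h1, h2, h3⟩
    · exact Or.inl (h hx)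
    · exact Or.inr ⟨c, hc, h1, fun b hb => h (h2 b hb), h3⟩

/-- The interpretation `I(P,M)`: least fixed point of the immediate-consequence
operator of the reduct `P^M`. -/
def interp (P : Set (GClause α)) (M : Set α) : Set α := OrderHom.lfp (tcons P M)

/-- `M` is a stable model (answer set) of `P` iff `M = I(P,M)`. -/
def IsStable (P : Set (GClause α)) (M : Set α) : Prop := M = interp P M

end ASP
/-- The clause of `P̄`: negative atoms `¬b` become fresh barred atoms (`Sum.inr b`),
and the clause is identified with an implicational formula. -/
def cbar {α : Type} (c : ASP.GClause α) : ASP.PForm (α ⊕ α) :=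
  (c.pos.map Sum.inl ++ c.neg.map Sum.inr).foldr
    (fun b f => .imp (.at_ b) f) (.at_ (Sum.inl c.head))

/-!
Forward chaining in the reduct `P^M` is modus ponens through the clauses of `P̄`, with the
barred atoms of `M̄` discharging the negative premises; so the atoms provable from `P̄ ∪ M̄`
are closed under the consequence operator and contain `I(P,M)`. Conversely, the valuation
making `a` true iff `a ∈ I(P,M)` and `b̄` true iff `b ∉ M` satisfies every formula of
`P̄ ∪ M̄` (as `I(P,M)` is a fixed point), so by soundness every provable atom lies in `I(P,M)`.
-/

namespace ASP

section MinimalLogic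

variable {β : Type}

def PForm.eval (v : β → Prop) : PForm β → Prop
  | .at_ b => v b
  | .imp φ ψ => φ.eval v → ψ.eval v

theorem PPrv.sound {v : β → Prop} {Γ : Set (PForm β)} {φ : PForm β} (h : PPrv Γ φ)
    (hΓ : ∀ ψ ∈ Γ, ψ.eval v) : φ.eval v := by
  induction h with
  | ax hφ => exact hΓ _ hφ
  | impI _ ih =>
    intro hφ
    exact ih (Set.forall_mem_insert.mpr ⟨hφ, hΓ⟩)
  | impE _ _ ihImp ihArg => exact ihImp hΓ (ihArg hΓ)

theorem PForm.eval_foldr_imp (v : β → Prop) (l : List β) (φ : PForm β) :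
    (l.foldr (fun b f => .imp (.at_ b) f) φ).eval v ↔ ((∀ b ∈ l, v b) → φ.eval v) := by
  induction l with
  | nil => simp
  | cons b l ih =>
    simp only [List.foldr_cons, PForm.eval, ih, List.forall_mem_cons]
    exact ⟨fun h hl => h hl.1 hl.2, fun h hb hl => h ⟨hb, hl⟩⟩

theorem PPrv.of_foldr_imp {Γ : Set (PForm β)} {l : List β} {φ : PForm β}
    (h : PPrv Γ (l.foldr (fun b f => .imp (.at_ b) f) φ))
    (hl : ∀ b ∈ l, PPrv Γ (.at_ b)) : PPrv Γ φ := by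
  induction l with
  | nil => exact h
  | cons b l ih =>
    rw [List.forall_mem_cons] at hl
    exact ih (h.impE hl.1) hl.2

end MinimalLogic

variable {α : Type}

/-- The theory `P̄ ∪ M̄`. -/
def barTheory (P : Set (GClause α)) (B M : Set α) : Set (PForm (α ⊕ α)) :=
  cbar '' P ∪ {f | ∃ b ∈ B, b ∉ M ∧ f = .at_ (Sum.inr b)}

theorem eval_cbar (v : α ⊕ α → Prop) (c : GClause α) :
    (cbar c).eval v ↔
      ((∀ b ∈ c.pos, v (.inl b)) → (∀ b ∈ c.neg, v (.inr b)) → v (.inl c.head)) := by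
  simp only [cbar, PForm.eval_foldr_imp, List.forall_mem_append, List.forall_mem_map,
    PForm.eval, and_imp]

theorem head_mem_interp {P : Set (GClause α)} {M : Set α} {c : GClause α} (hc : c ∈ P)
    (hpos : ∀ b ∈ c.pos, b ∈ interp P M) (hneg : ∀ b ∈ c.neg, b ∉ M) :
    c.head ∈ interp P M := by
  rw [interp, ← OrderHom.map_lfp]
  exact Or.inr ⟨c, hc, rfl, hpos, hneg⟩

theorem interp_subset_provable {P : Set (GClause α)} {B M : Set α}
    (hP : ∀ c ∈ P, c.head ∈ B ∧ (∀ b ∈ c.pos, b ∈ B) ∧ (∀ b ∈ c.neg, b ∈ B)) :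
    interp P M ⊆ {a | a ∈ B ∧ PPrv (barTheory P B M) (.at_ (.inl a))} := by
  refine OrderHom.lfp_le _ ?_
  rintro a (ha | ⟨c, hc, rfl, hpos, hneg⟩)
  · exact ha
  obtain ⟨hhead, -, hnegB⟩ := hP c hc
  refine ⟨hhead, PPrv.of_foldr_imp (PPrv.ax (Or.inl ⟨c, hc, rfl⟩)) ?_⟩
  simp only [List.forall_mem_append, List.forall_mem_map]
  exact ⟨fun b hb => (hpos b hb).2, fun b hb => .ax (Or.inr ⟨b, hnegB b hb, hneg b hb, rfl⟩)⟩

theorem mem_interp_of_provable {P : Set (GClause α)} {B M : Set α} {a : α}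
    (h : PPrv (barTheory P B M) (.at_ (.inl a))) : a ∈ interp P M := by
  refine h.sound (v := Sum.elim (· ∈ interp P M) (· ∉ M)) ?_
  rintro ψ (⟨c, hc, rfl⟩ | ⟨b, -, hbM, rfl⟩)
  · exact (eval_cbar _ c).mpr (head_mem_interp hc)
  · exact hbM

end ASP

theorem stmt3_general {α : Type} (P : Set (ASP.GClause α))
    (B M : Set α)
    (hP : ∀ c ∈ P, c.head ∈ B ∧ (∀ b ∈ c.pos, b ∈ B) ∧ (∀ b ∈ c.neg, b ∈ B)) :
    ASP.interp P M =
      {a | a ∈ B ∧ ASP.PPrv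
        ((cbar '' P) ∪ {f | ∃ b ∈ B, b ∉ M ∧ f = .at_ (Sum.inr b)})
        (.at_ (Sum.inl a))} :=
  (ASP.interp_subset_provable hP).antisymm fun _ ha => ASP.mem_interp_of_provable ha.2

/-- `I(P,M)` equals the set of atoms `a ∈ B(P)` such that `P̄ ∪ M̄` proves `a`
in minimal propositional logic, where `M̄ = {b̄ | b ∈ B(P) \ M}`. -/
theorem stmt3 {α : Type} (P : Set (ASP.GClause α)) (hfin : P.Finite)
    (B M : Set α) (hM : M ⊆ B)
    (hP : ∀ c ∈ P, c.head ∈ B ∧ (∀ b ∈ c.pos, b ∈ B) ∧ (∀ b ∈ c.neg, b ∈ B)) :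
    ASP.interp P M =
      {a | a ∈ B ∧ ASP.PPrv
        ((cbar '' P) ∪ {f | ∃ b ∈ B, b ∉ M ∧ f = .at_ (Sum.inr b)})
        (.at_ (Sum.inl a))} :=
  stmt3_general P B M hP
end

section
/- If R(c̄) ∉ I(P,M), then there exists a refutation tree for R(c̄): a possibly infinite tree labeled by ground atoms whose root is labeled R(c̄), having for every ground clause with target equal to the node label one immediate subtree, which is either a refutation for some positive atom b occurring in the clause body, or a single node labeled b̄ for some b ∈ M with ¬b in the body. -/
/-- Existence of a (possibly infinite) refutation tree for `a`, expressed
coinductively: a set R of "refutable" atoms containing `a` such that for every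
b ∈ R and every ground clause with target b, either some positive body atom is
again in R, or some negated body atom belongs to M. -/
def HasRefutation {α : Type} (P : Set (ASP.GClause α)) (M : Set α) (a : α) : Prop :=
  ∃ R : α → Prop, R a ∧ ∀ b, R b → ∀ c ∈ P, c.head = b →
    ((∃ p ∈ c.pos, R p) ∨ (∃ s ∈ c.neg, s ∈ M))

/-- If `R(c̄) ∉ I(P,M)` then there exists a refutation for `R(c̄)`. -/
theorem stmt9 {α : Type} (P : Set (ASP.GClause α)) (M : Set α) (a : α)
    (h : a ∉ ASP.interp P M) : HasRefutation P M a := by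
  refine ⟨(· ∉ ASP.interp P M), h, fun b hb c hc hhead => ?_⟩
  by_contra! hclosed
  exact hb (hhead ▸ ASP.head_mem_interp hc hclosed.1 hclosed.2)
end
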